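/- Let S = {x₁,...,x_n} ⊆ ℝ^d with ‖x_i‖_∞ ≤ 1, and let F_Q = {x ↦ ∑_{k=1}^m a_k σ(w_kᵀx) : ∑_k |a_k|‖w_k‖₁ ≤ Q} be two-layer ReLU networks with path norm at most Q. Then the empirical Rademacher complexity satisfies R_n(F_Q ∘ S) ≤ 2Q √(2 ln(2d)/n). -/

import Mathlib

/-!
Fix a sign pattern `ε`. Exchanging the sums writes the signed sum of a network as
`∑ₖ aₖ g(wₖ)` with `g(w) = ∑ᵢ εᵢ σ(⟨w, xᵢ⟩)`, and positive homogeneity of `σ` gives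
`|g(w)| ≤ ‖w‖₁ (K(ε) + K(-ε))`, where `K(ε)` is the supremum of `g` over the unit ℓ¹ ball. Hence
the network class contributes at most `Q (K(ε) + K(-ε))`, and on average `2Q E K`.
The contraction inequality, proved one coordinate at a time by pairing the sign patterns that
differ in that coordinate, removes `σ`; ℓ¹–ℓ∞ duality bounds the supremum of the linear class by
`maxⱼ |∑ᵢ εᵢ xᵢⱼ|`; and Massart's lemma (Jensen for `exp`, `cosh t ≤ exp (t² / 2)`, and a union
over the `2d` signed coordinates) bounds the mean of this maximum by `√(2 n log (2d))`.
-/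

/-- The sign `+1`/`-1` associated to a Boolean. -/
def radSign (b : Bool) : ℝ := if b then 1 else -1

open Finset Real Metric

@[simp] lemma radSign_true : radSign true = 1 := rfl

@[simp] lemma radSign_false : radSign false = -1 := rfl

@[simp] lemma radSign_not (b : Bool) : radSign (!b) = -radSign b := by cases b <;> simp

@[simp] lemma abs_radSign (b : Bool) : |radSign b| = 1 := by cases b <;> simp

lemma Function.Involutive.sum_le_sum_of_add_le {α : Type*} [Fintype α] {σ : α → α}
    (hσ : Function.Involutive σ) {f g : α → ℝ} (h : ∀ a, f a + f (σ a) ≤ g a + g (σ a)) :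
    ∑ a, f a ≤ ∑ a, g a := by
  have hsum : ∀ F : α → ℝ, ∑ a, (F a + F (σ a)) = 2 * ∑ a, F a := fun F => by
    rw [sum_add_distrib, hσ.bijective.sum_comp F]; ring
  linarith [hsum f, hsum g, sum_le_sum fun a (_ : a ∈ univ) => h a]

lemma iSup_add_iSup_le_of_abs_sub_le {P : Type*} [Nonempty P] {B u v : P → ℝ}
    (hv : ∀ p q, |v p - v q| ≤ |u p - u q|)
    (h₁ : BddAbove (Set.range fun p => B p + u p)) (h₂ : BddAbove (Set.range fun p => B p - u p)) :
    (⨆ p, B p + v p) + (⨆ p, B p - v p) ≤ (⨆ p, B p + u p) + (⨆ p, B p - u p) := by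
  refine ciSup_add_ciSup_le fun p q => ?_
  have := (le_abs_self _).trans (hv p q)
  rcases abs_cases (u p - u q) with ⟨h, -⟩ | ⟨h, -⟩
  · linarith [le_ciSup h₁ p, le_ciSup h₂ q]
  · linarith [le_ciSup h₁ q, le_ciSup h₂ p]

section Rademacher

variable {ι P : Type*} [Fintype ι]

noncomputable def rademacherSup (t : ι → P → ℝ) (s : ι → Bool) : ℝ :=
  ⨆ p, ∑ i, radSign (s i) * t i p

lemma bddAbove_range_rademacherSum {t : ι → P → ℝ} {C : ℝ} (ht : ∀ i p, |t i p| ≤ C)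
    (s : ι → Bool) : BddAbove (Set.range fun p => ∑ i, radSign (s i) * t i p) := by
  refine ⟨∑ _i : ι, C, ?_⟩
  rintro _ ⟨p, rfl⟩
  refine sum_le_sum fun i _ => (le_abs_self _).trans ?_
  rw [abs_mul, abs_radSign, one_mul]
  exact ht i p

variable [DecidableEq ι] [Nonempty P]

lemma sum_rademacherSup_update_le {t : ι → P → ℝ} {C : ℝ}
    (ht : ∀ i p, |t i p| ≤ C) (i₀ : ι) {v : P → ℝ}
    (hv : ∀ p q, |v p - v q| ≤ |t i₀ p - t i₀ q|) :
    ∑ s, rademacherSup (Function.update t i₀ v) s ≤ ∑ s, rademacherSup t s := by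
  let σ : (ι → Bool) → (ι → Bool) := fun s => Function.update s i₀ (!s i₀)
  have hσ : Function.Involutive σ := fun s => by
    ext i; by_cases hi : i = i₀ <;> simp [σ, hi]
  refine hσ.sum_le_sum_of_add_le fun s => ?_
  let B : P → ℝ := fun p => ∑ i ∈ univ.erase i₀, radSign (s i) * t i p
  have hsplit : ∀ (s' : ι → Bool) (t' : ι → P → ℝ), (∀ i ≠ i₀, s' i = s i) →
      (∀ i ≠ i₀, t' i = t i) → ∀ p, ∑ i, radSign (s' i) * t' i p = B p + radSign (s' i₀) * t' i₀ p := by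
    intro s' t' hs ht' p
    rw [← add_sum_erase _ _ (mem_univ i₀), add_comm]
    congr 1
    refine sum_congr rfl fun i hi => ?_
    rw [hs i (ne_of_mem_erase hi), ht' i (ne_of_mem_erase hi)]
  have hσs : ∀ i ≠ i₀, σ s i = s i := fun i hi => Function.update_of_ne hi _ _
  have hupd : ∀ i ≠ i₀, Function.update t i₀ v i = t i := fun i hi => Function.update_of_ne hi _ _
  have hσi₀ : radSign (σ s i₀) = -radSign (s i₀) := by simp [σ]
  have ht_s := hsplit s t (fun _ _ => rfl) (fun _ _ => rfl)
  have ht_σs := hsplit (σ s) t hσs (fun _ _ => rfl)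
  have hv_s := hsplit s _ (fun _ _ => rfl) hupd
  have hv_σs := hsplit (σ s) _ hσs hupd
  simp only [Function.update_self, hσi₀, neg_mul, ← sub_eq_add_neg] at ht_σs hv_s hv_σs
  simp only [rademacherSup, ht_s, ht_σs, hv_s, hv_σs]
  refine iSup_add_iSup_le_of_abs_sub_le (fun p q => ?_) ?_ ?_
  · rw [← mul_sub, ← mul_sub, abs_mul, abs_mul, abs_radSign, one_mul, one_mul]
    exact hv p q
  · simpa only [ht_s] using bddAbove_range_rademacherSum ht s
  · simpa only [ht_σs] using bddAbove_range_rademacherSum ht (σ s)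

/-- The Ledoux–Talagrand contraction inequality. -/
theorem sum_rademacherSup_comp_le {t : ι → P → ℝ} {C : ℝ} (ht : ∀ i p, |t i p| ≤ C)
    {φ : ℝ → ℝ} (hφ : LipschitzWith 1 φ) :
    ∑ s, rademacherSup (fun i p => φ (t i p)) s ≤ ∑ s, rademacherSup t s := by
  have hφ' : ∀ a b, |φ a - φ b| ≤ |a - b| := fun a b => by
    simpa [Real.dist_eq] using hφ.dist_le_mul a b
  let tT : Finset ι → ι → P → ℝ := fun T i p => if i ∈ T then φ (t i p) else t i p
  have htT : ∀ T i p, |tT T i p| ≤ |φ 0| + C := fun T i p => by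
    by_cases hi : i ∈ T
    · simp only [tT, if_pos hi]
      have := hφ' (t i p) 0
      rw [sub_zero] at this
      linarith [abs_sub_abs_le_abs_sub (φ (t i p)) (φ 0), ht i p]
    · simp only [tT, if_neg hi]
      linarith [ht i p, abs_nonneg (φ 0)]
  have key : ∀ T, ∑ s, rademacherSup (tT T) s ≤ ∑ s, rademacherSup t s := by
    intro T
    induction T using Finset.induction_on with
    | empty => simp [tT]
    | insert i₀ T hi₀ ih =>
      have hupd : tT (insert i₀ T) = Function.update (tT T) i₀ fun p => φ (t i₀ p) := by
        ext i p
        by_cases hi : i = i₀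
        · subst hi; simp [tT]
        · simp [tT, hi]
      rw [hupd]
      refine (sum_rademacherSup_update_le (htT T) i₀ fun p q => ?_).trans ih
      simpa [tT, hi₀] using hφ' (t i₀ p) (t i₀ q)
  simpa [tT] using key univ

end Rademacher

lemma exp_mean_le_mean_exp {α : Type*} [Fintype α] [Nonempty α] (f : α → ℝ) :
    exp ((∑ a, f a) / Fintype.card α) ≤ (∑ a, exp (f a)) / Fintype.card α := by
  have hcard : (0 : ℝ) < Fintype.card α := by exact_mod_cast Fintype.card_pos
  have := convexOn_exp.map_sum_le (t := univ) (w := fun _ => (Fintype.card α : ℝ)⁻¹) (p := f)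
    (fun _ _ => by positivity) (by simp [card_univ, hcard.ne']) (fun _ _ => Set.mem_univ _)
  simp only [smul_eq_mul, inv_mul_eq_div] at this
  rwa [← sum_div, ← sum_div] at this

lemma exp_abs_le_exp_add_exp_neg (a : ℝ) : exp |a| ≤ exp a + exp (-a) := by
  rcases abs_cases a with ⟨h, -⟩ | ⟨h, -⟩ <;> rw [h] <;> linarith [exp_pos a, exp_pos (-a)]

lemma exp_mul_iSup_abs_le {κ : Type*} [Fintype κ] [Nonempty κ] (v : κ → ℝ) {l : ℝ} (hl : 0 ≤ l) :
    exp (l * ⨆ j, |v j|) ≤ ∑ j, (exp (l * v j) + exp (-(l * v j))) := by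
  obtain ⟨j₀, hj₀⟩ := Finite.exists_max fun j => |v j|
  calc exp (l * ⨆ j, |v j|) ≤ exp |l * v j₀| := by
        rw [abs_mul, abs_of_nonneg hl]
        gcongr
        exact ciSup_le hj₀
    _ ≤ exp (l * v j₀) + exp (-(l * v j₀)) := exp_abs_le_exp_add_exp_neg _
    _ ≤ _ := single_le_sum (f := fun j => exp (l * v j) + exp (-(l * v j)))
        (fun j _ => by positivity) (mem_univ j₀)

section Massart

variable {ι κ : Type*} [Fintype ι] [DecidableEq ι] [Fintype κ]

lemma sum_exp_rademacherSum_le (c : ι → ℝ) :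
    ∑ s : ι → Bool, exp (∑ i, radSign (s i) * c i)
      ≤ 2 ^ Fintype.card ι * exp (∑ i, c i ^ 2 / 2) := by
  calc ∑ s : ι → Bool, exp (∑ i, radSign (s i) * c i)
      = ∏ i, ∑ b : Bool, exp (radSign b * c i) := by
        simp only [Fintype.prod_sum, exp_sum]
    _ = ∏ i, 2 * cosh (c i) := by
        refine prod_congr rfl fun i _ => ?_
        simp [cosh_eq]
        ring
    _ ≤ ∏ i, 2 * exp (c i ^ 2 / 2) := by
        gcongr with i
        exact cosh_le_exp_half_sq _
    _ = 2 ^ Fintype.card ι * exp (∑ i, c i ^ 2 / 2) := by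
        rw [prod_mul_distrib, prod_const, ← exp_sum, card_univ]

lemma sum_exp_mul_iSup_abs_rademacherSum_le [Nonempty κ] (x : ι → κ → ℝ) {R : ℝ}
    (hx : ∀ j, ∑ i, x i j ^ 2 ≤ R) {l : ℝ} (hl : 0 ≤ l) :
    ∑ s : ι → Bool, exp (l * ⨆ j, |∑ i, radSign (s i) * x i j|)
      ≤ 2 * Fintype.card κ * (2 ^ Fintype.card ι * exp (l ^ 2 * R / 2)) := by
  have hmgf : ∀ c : ι → ℝ, ∑ i, c i ^ 2 ≤ l ^ 2 * R → ∑ s : ι → Bool,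
      exp (∑ i, radSign (s i) * c i) ≤ 2 ^ Fintype.card ι * exp (l ^ 2 * R / 2) := fun c hc => by
    refine (sum_exp_rademacherSum_le c).trans ?_
    gcongr
    rw [← sum_div]
    linarith
  have hsq : ∀ j, ∑ i, (l * x i j) ^ 2 ≤ l ^ 2 * R := fun j => by
    simp only [mul_pow, ← mul_sum]
    exact mul_le_mul_of_nonneg_left (hx j) (sq_nonneg l)
  have hscale : ∀ (s : ι → Bool) j (c : ℝ),
      ∑ i, radSign (s i) * (c * x i j) = c * ∑ i, radSign (s i) * x i j := fun s j c => by
    rw [mul_sum]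
    exact sum_congr rfl fun _ _ => by ring
  have hpt : ∀ s : ι → Bool, exp (l * ⨆ j, |∑ i, radSign (s i) * x i j|)
      ≤ ∑ j, (exp (∑ i, radSign (s i) * (l * x i j))
        + exp (∑ i, radSign (s i) * (-l * x i j))) := fun s => by
    have := exp_mul_iSup_abs_le (fun j => ∑ i, radSign (s i) * x i j) hl
    simp only [← neg_mul] at this
    simpa only [hscale] using this
  calc ∑ s : ι → Bool, exp (l * ⨆ j, |∑ i, radSign (s i) * x i j|)
      ≤ ∑ j, (∑ s : ι → Bool, exp (∑ i, radSign (s i) * (l * x i j))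
        + ∑ s : ι → Bool, exp (∑ i, radSign (s i) * (-l * x i j))) := by
        refine (sum_le_sum fun s _ => hpt s).trans_eq ?_
        rw [sum_comm]
        simp only [sum_add_distrib]
    _ ≤ ∑ _j : κ, 2 * (2 ^ Fintype.card ι * exp (l ^ 2 * R / 2)) := by
        gcongr with j
        rw [two_mul]
        gcongr
        · exact hmgf _ (hsq j)
        · exact hmgf _ (by simpa only [neg_mul, neg_sq] using hsq j)
    _ = 2 * Fintype.card κ * (2 ^ Fintype.card ι * exp (l ^ 2 * R / 2)) := by
        rw [sum_const, card_univ, nsmul_eq_mul]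
        ring

lemma mul_sum_iSup_abs_rademacherSum_le [Nonempty κ] (x : ι → κ → ℝ) {R : ℝ}
    (hx : ∀ j, ∑ i, x i j ^ 2 ≤ R) {l : ℝ} (hl : 0 < l) :
    l * ((∑ s : ι → Bool, ⨆ j, |∑ i, radSign (s i) * x i j|) / 2 ^ Fintype.card ι)
      ≤ log (2 * Fintype.card κ) + l ^ 2 * R / 2 := by
  have hN : (Fintype.card (ι → Bool) : ℝ) = 2 ^ Fintype.card ι := by simp
  rw [← exp_le_exp, mul_div_assoc', mul_sum, ← hN]
  refine (exp_mean_le_mean_exp _).trans ?_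
  rw [hN, div_le_iff₀ (by positivity), exp_add, exp_log (by positivity)]
  exact (sum_exp_mul_iSup_abs_rademacherSum_le x hx hl.le).trans_eq (by ring)

/-- Massart's finite class lemma. -/
theorem sum_iSup_abs_rademacherSum_le [Nonempty κ] (x : ι → κ → ℝ) {R : ℝ} (hR : 0 < R)
    (hx : ∀ j, ∑ i, x i j ^ 2 ≤ R) :
    (∑ s : ι → Bool, ⨆ j, |∑ i, radSign (s i) * x i j|) / 2 ^ Fintype.card ι
      ≤ √(2 * R * log (2 * Fintype.card κ)) := by
  have hL : 0 < log (2 * Fintype.card κ) := by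
    have : (1 : ℝ) ≤ Fintype.card κ := by exact_mod_cast Fintype.card_pos
    exact log_pos (by linarith)
  set μ := √(2 * R * log (2 * Fintype.card κ))
  have hμ : 0 < μ := sqrt_pos.mpr (by positivity)
  have hμ2 : μ ^ 2 = 2 * R * log (2 * Fintype.card κ) := sq_sqrt (by positivity)
  have h := mul_sum_iSup_abs_rademacherSum_le x hx (div_pos hμ hR)
  -- with `l = μ / R` the two terms on the right balance, each being `μ² / (2R)`
  have hbalance : log (2 * Fintype.card κ) + (μ / R) ^ 2 * R / 2 = μ / R * μ := by
    field_simp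
    linarith
  rw [hbalance] at h
  exact le_of_mul_le_mul_left h (div_pos hμ hR)

end Massart

section PathNorm

variable {ι κ : Type*} [Fintype κ]

lemma abs_sum_mul_le_of_abs_le {w a : κ → ℝ} {C : ℝ} (ha : ∀ j, |a j| ≤ C) :
    |∑ j, w j * a j| ≤ (∑ j, |w j|) * C := by
  rw [sum_mul]
  refine (abs_sum_le_sum_abs _ _).trans (sum_le_sum fun j _ => ?_)
  rw [abs_mul]
  exact mul_le_mul_of_nonneg_left (ha j) (abs_nonneg _)

lemma le_norm_mul_iSup_closedBall {E : Type*} [NormedAddCommGroup E] [NormedSpace ℝ E]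
    {f : E → ℝ} (hf : ∀ c : ℝ, 0 ≤ c → ∀ w, f (c • w) = c * f w)
    (hbdd : BddAbove (Set.range fun u : closedBall (0 : E) 1 => f u)) (w : E) :
    f w ≤ ‖w‖ * ⨆ u : closedBall (0 : E) 1, f u := by
  rcases eq_or_ne w 0 with rfl | hw
  · have h0 : f 0 = 0 := by simpa using hf 0 le_rfl 0
    simp [h0]
  have hu : ‖w‖⁻¹ • w ∈ closedBall (0 : E) 1 := by
    simp [norm_smul, inv_mul_cancel₀ (norm_ne_zero_iff.mpr hw)]
  calc f w = ‖w‖ * f (‖w‖⁻¹ • w) := by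
        rw [← hf _ (norm_nonneg w), smul_smul, mul_inv_cancel₀ (norm_ne_zero_iff.mpr hw), one_smul]
    _ ≤ ‖w‖ * ⨆ u : closedBall (0 : E) 1, f u := by
        gcongr
        exact le_ciSup hbdd ⟨_, hu⟩

lemma sum_abs_le_one_of_mem_l1Ball (w : closedBall (0 : PiLp 1 fun _ : κ => ℝ) 1) :
    ∑ j, |w.1 j| ≤ 1 := by
  have hw := w.2
  rw [mem_closedBall_zero_iff, PiLp.norm_eq_of_L1] at hw
  simpa using hw

def l1BallLinear (x : ι → κ → ℝ) (i : ι) (w : closedBall (0 : PiLp 1 fun _ : κ => ℝ) 1) : ℝ :=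
  ∑ j, w.1 j * x i j

lemma abs_l1BallLinear_le {x : ι → κ → ℝ} (hx : ∀ i j, |x i j| ≤ 1) (i : ι) (w) :
    |l1BallLinear x i w| ≤ 1 :=
  (abs_sum_mul_le_of_abs_le (hx i)).trans (by linarith [sum_abs_le_one_of_mem_l1Ball w])

lemma rademacherSup_l1BallLinear_le [Fintype ι] (x : ι → κ → ℝ) (s : ι → Bool) :
    rademacherSup (l1BallLinear x) s ≤ ⨆ j, |∑ i, radSign (s i) * x i j| := by
  have hbdd : BddAbove (Set.range fun j => |∑ i, radSign (s i) * x i j|) :=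
    (Set.finite_range _).bddAbove
  have hM : 0 ≤ ⨆ j, |∑ i, radSign (s i) * x i j| := Real.iSup_nonneg fun _ => abs_nonneg _
  refine ciSup_le fun w => ?_
  have hswap : ∑ i, radSign (s i) * l1BallLinear x i w = ∑ j, w.1 j * ∑ i, radSign (s i) * x i j := by
    simp only [l1BallLinear, mul_sum]
    rw [sum_comm]
    exact sum_congr rfl fun _ _ => sum_congr rfl fun _ _ => by ring
  rw [hswap]
  calc ∑ j, w.1 j * ∑ i, radSign (s i) * x i j
      ≤ (∑ j, |w.1 j|) * ⨆ j, |∑ i, radSign (s i) * x i j| :=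
        (le_abs_self _).trans (abs_sum_mul_le_of_abs_le fun j => le_ciSup hbdd j)
    _ ≤ ⨆ j, |∑ i, radSign (s i) * x i j| := mul_le_of_le_one_left hM (sum_abs_le_one_of_mem_l1Ball w)

def l1BallRelu (x : ι → κ → ℝ) (i : ι) (w : closedBall (0 : PiLp 1 fun _ : κ => ℝ) 1) : ℝ :=
  max (l1BallLinear x i w) 0

lemma abs_l1BallRelu_le {x : ι → κ → ℝ} (hx : ∀ i j, |x i j| ≤ 1) (i : ι) (w) :
    |l1BallRelu x i w| ≤ 1 := by
  have := abs_l1BallLinear_le hx i w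
  rcases le_total (l1BallLinear x i w) 0 with h | h <;> simp [l1BallRelu, h, this]

variable [Fintype ι]

lemma rademacherSup_l1BallRelu_nonneg {x : ι → κ → ℝ} (hx : ∀ i j, |x i j| ≤ 1)
    (s : ι → Bool) : 0 ≤ rademacherSup (l1BallRelu x) s :=
  le_ciSup_of_le (bddAbove_range_rademacherSum (abs_l1BallRelu_le hx) s)
    ⟨0, mem_closedBall_self zero_le_one⟩ (by simp [l1BallRelu, l1BallLinear])

-- Positive homogeneity of the ReLU rescales `w` into the unit ℓ¹ ball; flipping all signs
-- bounds the signed sum from below.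
lemma abs_sum_relu_le {x : ι → κ → ℝ} (hx : ∀ i j, |x i j| ≤ 1) (s : ι → Bool) (w : κ → ℝ) :
    |∑ i, radSign (s i) * max (∑ j, w j * x i j) 0|
      ≤ (∑ j, |w j|) * (rademacherSup (l1BallRelu x) s
        + rademacherSup (l1BallRelu x) (fun i => !s i)) := by
  have hle : ∀ s : ι → Bool, ∑ i, radSign (s i) * max (∑ j, w j * x i j) 0
      ≤ (∑ j, |w j|) * rademacherSup (l1BallRelu x) s := fun s => by
    have hhom : ∀ c : ℝ, 0 ≤ c → ∀ u : PiLp 1 (fun _ : κ => ℝ),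
        ∑ i, radSign (s i) * max (∑ j, (c • u) j * x i j) 0
          = c * ∑ i, radSign (s i) * max (∑ j, u j * x i j) 0 := fun c hc u => by
      have hrelu : ∀ a, max (c * a) 0 = c * max a 0 := fun a => by
        rw [mul_max_of_nonneg _ _ hc, mul_zero]
      simp only [PiLp.smul_apply, smul_eq_mul, mul_assoc, ← mul_sum, hrelu]
      rw [mul_sum]
      exact sum_congr rfl fun _ _ => by ring
    have := le_norm_mul_iSup_closedBall
      (f := fun u : PiLp 1 (fun _ : κ => ℝ) => ∑ i, radSign (s i) * max (∑ j, u j * x i j) 0) hhom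
      (bddAbove_range_rademacherSum (abs_l1BallRelu_le hx) s) (WithLp.toLp 1 w)
    have hnorm : ‖WithLp.toLp 1 w‖ = ∑ j, |w j| := by simp [PiLp.norm_eq_of_L1]
    rwa [hnorm] at this
  have hneg : -∑ i, radSign (s i) * max (∑ j, w j * x i j) 0
      = ∑ i, radSign (!s i) * max (∑ j, w j * x i j) 0 := by
    simp [← sum_neg_distrib]
  have hw : 0 ≤ ∑ j, |w j| := sum_nonneg fun j _ => abs_nonneg _
  have h₁ := rademacherSup_l1BallRelu_nonneg hx s
  have h₂ := rademacherSup_l1BallRelu_nonneg hx (fun i => !s i)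
  rw [abs_le]
  constructor
  · nlinarith [hle fun i => !s i]
  · nlinarith [hle s]

theorem sum_rademacherSup_l1BallRelu_le [DecidableEq ι] [Nonempty ι] [Nonempty κ]
    {x : ι → κ → ℝ} (hx : ∀ i j, |x i j| ≤ 1) :
    ∑ s, rademacherSup (l1BallRelu x) s
      ≤ 2 ^ Fintype.card ι * √(2 * Fintype.card ι * log (2 * Fintype.card κ)) := by
  have : Nonempty (closedBall (0 : PiLp 1 fun _ : κ => ℝ) 1) :=
    ⟨⟨0, mem_closedBall_self zero_le_one⟩⟩
  have hsq : ∀ j, ∑ i, x i j ^ 2 ≤ Fintype.card ι := fun j => by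
    simpa using sum_le_sum fun i (_ : i ∈ univ) => (sq_le_one_iff_abs_le_one _).mpr (hx i j)
  have hmassart := sum_iSup_abs_rademacherSum_le x (by positivity) hsq
  rw [div_le_iff₀ (by positivity), mul_comm] at hmassart
  calc ∑ s, rademacherSup (l1BallRelu x) s
      ≤ ∑ s, rademacherSup (l1BallLinear x) s :=
        sum_rademacherSup_comp_le (t := l1BallLinear x) (φ := fun a => max a 0) (abs_l1BallLinear_le hx)
          (LipschitzWith.id.max_const 0)
    _ ≤ ∑ s : ι → Bool, ⨆ j, |∑ i, radSign (s i) * x i j| :=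
        sum_le_sum fun s _ => rademacherSup_l1BallLinear_le x s
    _ ≤ _ := hmassart

lemma sSup_pathNorm_le {η : Type*} [Fintype η] {x : ι → κ → ℝ} (hx : ∀ i j, |x i j| ≤ 1)
    {Q : ℝ} (hQ : 0 ≤ Q) (s : ι → Bool) :
    sSup {v : ℝ | ∃ (A : η → ℝ) (W : η → κ → ℝ), (∑ k, |A k| * ∑ j, |W k j|) ≤ Q ∧
        v = ∑ i, radSign (s i) * ∑ k, A k * max (∑ j, W k j * x i j) 0}
      ≤ Q * (rademacherSup (l1BallRelu x) s
        + rademacherSup (l1BallRelu x) (fun i => !s i)) := by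
  set K := rademacherSup (l1BallRelu x) s
    + rademacherSup (l1BallRelu x) (fun i => !s i)
  have hK : 0 ≤ K := add_nonneg (rademacherSup_l1BallRelu_nonneg hx _)
    (rademacherSup_l1BallRelu_nonneg hx _)
  refine Real.sSup_le ?_ (mul_nonneg hQ hK)
  rintro _ ⟨A, W, hAW, rfl⟩
  have hswap : ∑ i, radSign (s i) * ∑ k, A k * max (∑ j, W k j * x i j) 0
      = ∑ k, A k * ∑ i, radSign (s i) * max (∑ j, W k j * x i j) 0 := by
    simp only [mul_sum]
    rw [sum_comm]
    exact sum_congr rfl fun _ _ => sum_congr rfl fun _ _ => by ring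
  calc ∑ i, radSign (s i) * ∑ k, A k * max (∑ j, W k j * x i j) 0
      ≤ ∑ k, |A k| * ((∑ j, |W k j|) * K) := by
        rw [hswap]
        refine sum_le_sum fun k _ => (le_abs_self _).trans ?_
        rw [abs_mul]
        exact mul_le_mul_of_nonneg_left (abs_sum_relu_le hx s (W k)) (abs_nonneg _)
    _ = (∑ k, |A k| * ∑ j, |W k j|) * K := by
        rw [sum_mul]
        exact sum_congr rfl fun _ _ => by ring
    _ ≤ Q * K := mul_le_mul_of_nonneg_right hAW hK

lemma sum_sSup_pathNorm_le [DecidableEq ι] {η : Type*} [Fintype η] {x : ι → κ → ℝ}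
    (hx : ∀ i j, |x i j| ≤ 1) {Q : ℝ} (hQ : 0 ≤ Q) :
    ∑ s : ι → Bool, sSup {v : ℝ | ∃ (A : η → ℝ) (W : η → κ → ℝ), (∑ k, |A k| * ∑ j, |W k j|) ≤ Q ∧
        v = ∑ i, radSign (s i) * ∑ k, A k * max (∑ j, W k j * x i j) 0}
      ≤ 2 * Q * ∑ s, rademacherSup (l1BallRelu x) s := by
  have hnot : Function.Involutive fun s : ι → Bool => fun i => !s i := fun s => by simp
  refine (sum_le_sum fun s _ => sSup_pathNorm_le hx hQ s).trans_eq ?_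
  rw [← mul_sum, sum_add_distrib, hnot.bijective.sum_comp
    (rademacherSup (l1BallRelu x))]
  ring

end PathNorm

/-- Rademacher complexity bound for the class of width-`m` two-layer ReLU networks
with path norm at most `Q`, over a sample `S ⊆ [-1,1]^d` of size `n`:
`R_n(F_Q ∘ S) ≤ 2Q √(2 ln(2d)/n)`. The expectation over the i.i.d. uniform signs is
written as the average over all `2ⁿ` sign patterns. -/
theorem radComplexity_path_norm_class
    (d n m : ℕ) (hd : 0 < d) (hn : 0 < n)
    (Q : ℝ) (hQ : 0 ≤ Q)
    (S : Fin n → Fin d → ℝ) (hS : ∀ i j, |S i j| ≤ 1) :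
    (1 / (n : ℝ)) *
        ((1 / (2 : ℝ) ^ n) *
          ∑ s : Fin n → Bool,
            sSup {v : ℝ | ∃ (A : Fin m → ℝ) (W : Fin m → Fin d → ℝ),
              (∑ k, |A k| * ∑ j, |W k j|) ≤ Q ∧
              v = ∑ i, radSign (s i) * ∑ k, A k * max (∑ j, W k j * S i j) 0})
      ≤ 2 * Q * Real.sqrt (2 * Real.log (2 * d) / n) := by
  have : Nonempty (Fin n) := ⟨⟨0, hn⟩⟩
  have : Nonempty (Fin d) := ⟨⟨0, hd⟩⟩
  have hnet := sum_sSup_pathNorm_le (η := Fin m) hS hQ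
  have hrelu := sum_rademacherSup_l1BallRelu_le hS
  simp only [Fintype.card_fin] at hrelu
  have hn' : (0 : ℝ) < n := by exact_mod_cast hn
  have hsqrt : √(2 * log (2 * d) / n) = √(2 * n * log (2 * d)) / n := by
    rw [show 2 * log (2 * d) / n = 2 * n * log (2 * d) / n ^ 2 by field_simp,
      sqrt_div' _ (sq_nonneg _), sqrt_sq hn'.le]
  calc _ ≤ 1 / (n : ℝ) * (1 / 2 ^ n * (2 * Q * (2 ^ n * √(2 * n * log (2 * d))))) := by
        gcongr
        exact hnet.trans (by gcongr)
    _ = 2 * Q * √(2 * log (2 * d) / n) := by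
        rw [hsqrt]
        field_simp
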